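/- Let p ∈ {1} ∪ (2,∞) and let p* satisfy 1/p + 1/p* = 1, with the conventions that p* = ∞, ‖·‖_{p*} is the ℓ_∞ norm, and m_1^{1/p*} = 1 when p = 1. Let z_1, …, z_n ∈ ℝ^{m_1} with ‖z_i‖_∞ ≤ 1 for all i. Then (1/n)·2^{-n} Σ_{ε ∈ {-1,1}^n} ‖Σ_{i=1}^n ε_i z_i‖_{p*} ≤ √(2·log(2m_1)/n) · m_1^{1/p*}. -/

import Mathlib

open scoped BigOperators Classical ENNReal NNReal
open MeasureTheory

/-- ReLU activation. -/
noncomputable def relu (x : ℝ) : ℝ := max x 0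

/-- Affine layer `u ↦ Ṽᵀ (1, u)` where the first row of `Ṽ` is the bias. -/
noncomputable def affineT {m n : ℕ} (V : Matrix (Fin (m + 1)) (Fin n) ℝ)
    (u : Fin m → ℝ) : Fin n → ℝ :=
  fun j => ∑ i, V i j * (Fin.cons (1 : ℝ) u : Fin (m + 1) → ℝ) i

/-- The `(j+1)`-layer map of a network: `T_{j+1} ∘ σ ∘ T_j ∘ ⋯ ∘ σ ∘ T_1`. -/
noncomputable def netFun (d : ℕ → ℕ)
    (V : ∀ i : ℕ, Matrix (Fin (d i + 1)) (Fin (d (i + 1))) ℝ) :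
    (j : ℕ) → (Fin (d 0) → ℝ) → (Fin (d (j + 1)) → ℝ)
  | 0 => fun x => affineT (V 0) x
  | (j + 1) => fun x => affineT (V (j + 1)) (fun i => relu (netFun d V j x i))

/-- `L_{p,q}` norm of a matrix, `q = ⊤` giving the sup over columns. -/
noncomputable def lpqNorm (p : ℝ) (q : ℝ≥0∞) {s1 s2 : ℕ}
    (A : Matrix (Fin s1) (Fin s2) ℝ) : ℝ :=
  if q = ⊤ then ⨆ j : Fin s2, (∑ i, |A i j| ^ p) ^ (1 / p)
  else (∑ j, (∑ i, |A i j| ^ p) ^ (q.toReal / p)) ^ (1 / q.toReal)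

/-- `1/q` with the convention `1/∞ = 0`. -/
noncomputable def qInv (q : ℝ≥0∞) : ℝ := if q = ⊤ then 0 else 1 / q.toReal

/-- The `ℓ_{p*}` norm, where `1/p + 1/p* = 1`, with `p* = ∞` when `p = 1`. -/
noncomputable def dualNorm (p : ℝ) {m : ℕ} (v : Fin m → ℝ) : ℝ :=
  if p = 1 then ⨆ j, |v j| else (∑ j, |v j| ^ (p / (p - 1))) ^ ((p - 1) / p)

/-- The class `N_{p,q,c,c_o}^{k,d}` of `L_{p,q}` weight-normalized networks. -/
noncomputable def NNclass (p : ℝ) (q : ℝ≥0∞) (c co : ℝ) (k : ℕ) (d : ℕ → ℕ) :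
    Set ((Fin (d 0) → ℝ) → (Fin (d (k + 1)) → ℝ)) :=
  {f | ∃ V : ∀ i : ℕ, Matrix (Fin (d i + 1)) (Fin (d (i + 1))) ℝ,
        f = netFun d V k ∧ (∀ i < k, lpqNorm p q (V i) = c) ∧ lpqNorm p q (V k) ≤ co}

/-- Scalar-valued version of `NNclass` (for networks with output width 1). -/
noncomputable def scalarClass (p : ℝ) (q : ℝ≥0∞) (c co : ℝ) (k : ℕ) (d : ℕ → ℕ) :
    Set ((Fin (d 0) → ℝ) → ℝ) :=
  {f | ∃ g ∈ NNclass p q c co k d, ∀ x j, g x j = f x}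

/-- Empirical Rademacher complexity of a class of real-valued functions. -/
noncomputable def empRad {X : Type*} {n : ℕ} (F : Set (X → ℝ)) (x : Fin n → X) : ℝ :=
  ((2 : ℝ) ^ n)⁻¹ * ∑ ε : Fin n → Bool,
    ⨆ f ∈ F, (n : ℝ)⁻¹ * ∑ i, (if ε i then (1 : ℝ) else -1) * f (x i)

/-!
The `ℓ_{p*}` norm on `ℝ^m` is at most `m^{1/p*}` times the sup norm, so it suffices to bound
the expected sup norm of the Rademacher sum `S = ∑ ε_i z_i` (Massart's finite class lemma).
For `t ≥ 0`, Jensen's inequality and `e^{t|x|} ≤ e^{tx} + e^{-tx}` give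
`exp (t 𝔼 ‖S‖_∞) ≤ ∑_j 𝔼 (e^{t S_j} + e^{-t S_j}) ≤ 2m e^{t² n / 2}`, because each coordinate
has moment generating function `∏_i cosh (t z_ij) ≤ e^{t² ∑_i z_ij² / 2}`.
Hence `𝔼 ‖S‖_∞ ≤ log (2m) / t + t n / 2`, and `t = √(2 log (2m) / n)` gives `√(2 n log (2m))`.
-/

open Finset Real

lemma exp_expect_le_expect_exp {α : Type*} [Fintype α] [Nonempty α] (f : α → ℝ) :
    exp (𝔼 x, f x) ≤ 𝔼 x, exp (f x) := by
  have hcard : (0 : ℝ) < Fintype.card α := by exact_mod_cast Fintype.card_pos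
  have hw : ∑ _x : α, ((Fintype.card α : ℝ))⁻¹ = 1 := by
    rw [sum_const, card_univ, nsmul_eq_mul]; field_simp
  simpa only [Fintype.expect_eq_sum_div_card, sum_div, smul_eq_mul, inv_mul_eq_div] using
    convexOn_exp.map_sum_le (t := univ) (fun _ _ => inv_nonneg.2 hcard.le) hw
      (fun _ _ => Set.mem_univ (f _))

lemma le_sqrt_of_forall_mul_le {x L s : ℝ} (hL : 0 < L) (hs : 0 < s)
    (h : ∀ t, 0 ≤ t → t * x ≤ L + t ^ 2 * s / 2) : x ≤ √(2 * L * s) := by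
  set t := √(2 * L / s)
  have ht : 0 < t := sqrt_pos.2 (by positivity)
  have ht_sq : t ^ 2 * s / 2 = L := by
    rw [sq_sqrt (by positivity)]; field_simp
  have hsqrt : √(2 * L * s) * t = 2 * L := by
    rw [← sqrt_mul (by positivity), show 2 * L * s * (2 * L / s) = (2 * L) ^ 2 by field_simp,
      sqrt_sq (by positivity)]
  refine le_of_mul_le_mul_right ?_ ht
  linarith [h t ht.le]

section Rademacher

variable {ι κ : Type*} [Fintype ι] [Fintype κ]

noncomputable def rademacherSum (ε : ι → Bool) (a : ι → ℝ) : ℝ :=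
  ∑ i, (if ε i then 1 else -1) * a i

variable [DecidableEq ι]

lemma expect_prod_apply_bool (g : ι → Bool → ℝ) :
    𝔼 ε : ι → Bool, ∏ i, g i (ε i) = ∏ i, (g i true + g i false) / 2 := by
  rw [Fintype.expect_eq_sum_div_card, ← Fintype.prod_sum, Fintype.card_fun, Fintype.card_bool,
    prod_div_distrib, prod_const, card_univ]
  simp only [Fintype.sum_bool, Nat.cast_pow, Nat.cast_ofNat]

lemma expect_exp_mul_rademacherSum_le (t : ℝ) (a : ι → ℝ) :
    𝔼 ε, exp (t * rademacherSum ε a) ≤ exp (t ^ 2 * (∑ i, a i ^ 2) / 2) := by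
  calc 𝔼 ε, exp (t * rademacherSum ε a)
      = 𝔼 ε : ι → Bool, ∏ i, exp (t * ((if ε i then 1 else -1) * a i)) := by
        simp only [rademacherSum, mul_sum, exp_sum]
    _ = ∏ i, cosh (t * a i) := by
        rw [expect_prod_apply_bool fun i b => exp (t * ((if b then 1 else -1) * a i))]
        refine prod_congr rfl fun i _ => ?_
        simp only [Bool.false_eq_true, if_true, if_false, cosh_eq]
        ring_nf
    _ ≤ ∏ i, exp ((t * a i) ^ 2 / 2) :=
        prod_le_prod (fun i _ => (cosh_pos _).le) fun i _ => cosh_le_exp_half_sq _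
    _ = exp (t ^ 2 * (∑ i, a i ^ 2) / 2) := by
        rw [← exp_sum, mul_sum, sum_div]
        simp only [mul_pow]

lemma exp_mul_norm_le_sum [Nonempty κ] {t : ℝ} (ht : 0 ≤ t) (v : κ → ℝ) :
    exp (t * ‖v‖) ≤ ∑ j, (exp (t * v j) + exp (-t * v j)) := by
  obtain ⟨j₀, -, hj₀⟩ := exists_max_image univ (fun j => |v j|) univ_nonempty
  have hnorm : ‖v‖ ≤ |v j₀| :=
    (pi_norm_le_iff_of_nonneg (abs_nonneg _)).2 fun j => hj₀ j (mem_univ j)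
  calc exp (t * ‖v‖) ≤ exp |t * v j₀| := by
        rw [abs_mul, abs_of_nonneg ht]; gcongr
    _ ≤ exp (t * v j₀) + exp (-t * v j₀) := by
        rw [neg_mul]; exact exp_abs_le _
    _ ≤ ∑ j, (exp (t * v j) + exp (-t * v j)) :=
        single_le_sum (f := fun j => exp (t * v j) + exp (-t * v j))
          (fun j _ => by positivity) (mem_univ j₀)

lemma mul_expect_norm_rademacherSum_le [Nonempty κ] (z : ι → κ → ℝ) {s : ℝ}
    (hz : ∀ j, ∑ i, z i j ^ 2 ≤ s) {t : ℝ} (ht : 0 ≤ t) :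
    t * 𝔼 ε, ‖fun j => rademacherSum ε (z · j)‖ ≤
      log (2 * Fintype.card κ) + t ^ 2 * s / 2 := by
  have hmgf (u : ℝ) (j : κ) : 𝔼 ε, exp (u * rademacherSum ε (z · j)) ≤ exp (u ^ 2 * s / 2) :=
    (expect_exp_mul_rademacherSum_le u _).trans (by gcongr; exact hz j)
  rw [← exp_le_exp, exp_add, exp_log (by positivity), mul_expect]
  calc exp (𝔼 ε, t * ‖fun j => rademacherSum ε (z · j)‖)
      ≤ 𝔼 ε, exp (t * ‖fun j => rademacherSum ε (z · j)‖) := exp_expect_le_expect_exp _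
    _ ≤ 𝔼 ε, ∑ j, (exp (t * rademacherSum ε (z · j)) + exp (-t * rademacherSum ε (z · j))) :=
        expect_le_expect fun ε _ => exp_mul_norm_le_sum ht _
    _ = ∑ j, (𝔼 ε, exp (t * rademacherSum ε (z · j)) +
          𝔼 ε, exp (-t * rademacherSum ε (z · j))) := by
        rw [expect_sum_comm]; simp only [expect_add_distrib]
    _ ≤ ∑ _j : κ, (exp (t ^ 2 * s / 2) + exp (t ^ 2 * s / 2)) := by
        refine sum_le_sum fun j _ => add_le_add (hmgf t j) ?_
        simpa only [neg_sq] using hmgf (-t) j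
    _ = 2 * Fintype.card κ * exp (t ^ 2 * s / 2) := by
        rw [sum_const, card_univ, nsmul_eq_mul]; ring

theorem expect_norm_rademacherSum_le [Nonempty κ] (z : ι → κ → ℝ) {s : ℝ} (hs : 0 < s)
    (hz : ∀ j, ∑ i, z i j ^ 2 ≤ s) :
    𝔼 ε, ‖fun j => rademacherSum ε (z · j)‖ ≤ √(2 * log (2 * Fintype.card κ) * s) := by
  have hcard : (1 : ℝ) ≤ Fintype.card κ := by exact_mod_cast Fintype.card_pos
  exact le_sqrt_of_forall_mul_le (log_pos (by linarith)) hs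
    fun t ht => mul_expect_norm_rademacherSum_le z hz ht

end Rademacher

lemma dualNorm_le_rpow_mul_norm {p : ℝ} (hp : 1 ≤ p) {m : ℕ} (v : Fin m → ℝ) :
    dualNorm p v ≤ (m : ℝ) ^ (1 - 1 / p) * ‖v‖ := by
  rcases hp.eq_or_lt with rfl | hp
  · simp only [dualNorm, if_true, div_one, sub_self, rpow_zero, one_mul]
    exact Real.iSup_le (fun j => norm_le_pi_norm v j) (norm_nonneg v)
  set q := p / (p - 1)
  have hq : 0 < q := div_pos (by linarith) (by linarith)
  have hexp : (p - 1) / p = q⁻¹ := by rw [inv_div]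
  have hsum : ∑ j, |v j| ^ q ≤ m * ‖v‖ ^ q := by
    calc ∑ j, |v j| ^ q ≤ ∑ _j : Fin m, ‖v‖ ^ q :=
          sum_le_sum fun j _ => rpow_le_rpow (abs_nonneg _) (norm_le_pi_norm v j) hq.le
      _ = m * ‖v‖ ^ q := by simp
  calc dualNorm p v = (∑ j, |v j| ^ q) ^ q⁻¹ := by
        rw [dualNorm, if_neg hp.ne', hexp]
    _ ≤ (m * ‖v‖ ^ q) ^ q⁻¹ := by gcongr
    _ = (m : ℝ) ^ (1 - 1 / p) * ‖v‖ := by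
        rw [mul_rpow (by positivity) (by positivity), rpow_rpow_inv (norm_nonneg v) hq.ne',
          ← hexp]
        congr 1; field_simp


/-- Lemma 4, case `p = 1` or `p > 2`: expected `ℓ_{p*}` norm of a Rademacher average
of vectors bounded in `ℓ_∞` (with `p* = ∞` and `m₁^{1/p*} = 1` when `p = 1`). -/
theorem rademacher_vector_bound_p_one_or_gt_two
    (p : ℝ) (hp : p = 1 ∨ 2 < p) (m1 n : ℕ) (hm : 0 < m1) (hn : 1 ≤ n)
    (z : Fin n → Fin m1 → ℝ) (hz : ∀ i j, |z i j| ≤ 1) :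
    (n : ℝ)⁻¹ * (((2 : ℝ) ^ n)⁻¹ * ∑ ε : Fin n → Bool,
        dualNorm p (fun j => ∑ i, (if ε i then (1 : ℝ) else -1) * z i j)) ≤
      Real.sqrt (2 * Real.log (2 * m1) / n) * (m1 : ℝ) ^ (1 - 1 / p) := by
  have hp1 : 1 ≤ p := by rcases hp with rfl | hp <;> linarith
  have : Nonempty (Fin m1) := ⟨⟨0, hm⟩⟩
  have hn0 : (0 : ℝ) < n := by exact_mod_cast hn
  have hcol (j : Fin m1) : ∑ i, z i j ^ 2 ≤ n := by
    calc ∑ i, z i j ^ 2 ≤ ∑ _i : Fin n, (1 : ℝ) :=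
          sum_le_sum fun i _ => (sq_le_one_iff_abs_le_one _).2 (hz i j)
      _ = n := by simp
  have hmassart := expect_norm_rademacherSum_le z hn0 hcol
  rw [Fintype.card_fin] at hmassart
  calc (n : ℝ)⁻¹ * (((2 : ℝ) ^ n)⁻¹ * ∑ ε : Fin n → Bool,
        dualNorm p (fun j => rademacherSum ε (z · j)))
      = (n : ℝ)⁻¹ * 𝔼 ε, dualNorm p (fun j => rademacherSum ε (z · j)) := by
        simp [Fintype.expect_eq_sum_div_card, div_eq_inv_mul]
    _ ≤ (n : ℝ)⁻¹ * ((m1 : ℝ) ^ (1 - 1 / p) * 𝔼 ε, ‖fun j => rademacherSum ε (z · j)‖) := by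
        refine mul_le_mul_of_nonneg_left ?_ (by positivity)
        rw [mul_expect]
        exact expect_le_expect fun ε _ => dualNorm_le_rpow_mul_norm hp1 _
    _ ≤ (n : ℝ)⁻¹ * ((m1 : ℝ) ^ (1 - 1 / p) * √(2 * log (2 * m1) * n)) := by
        gcongr
    _ = √(2 * log (2 * m1) / n) * (m1 : ℝ) ^ (1 - 1 / p) := by
        rw [show 2 * log (2 * m1) / n = 2 * log (2 * m1) * n / n ^ 2 by field_simp,
          sqrt_div' _ (by positivity), sqrt_sq hn0.le]
        ring
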